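/- Let m₀ ∈ H^{2,1}(ℝ) be real-valued. Then the function y(x) = x − ∫_x^∞ ( √(1 + m₀(s)²) − 1 ) ds is well defined (the integrand is integrable on ℝ), is continuously differentiable with y′(x) = √(1 + m₀(x)²) ≥ 1 for every x, and is a strictly increasing bijection from ℝ onto ℝ. -/

import Mathlib

open MeasureTheory Filter Set
open scoped Topology ENNReal

noncomputable section

/-- The weight `⟨x⟩ = (1+x²)^{1/2}`. -/
def jap (x : ℝ) : ℝ := Real.sqrt (1 + x ^ 2)

/-- `g` is the distributional (weak) derivative of `f` on `ℝ`. -/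
def IsWeakDeriv (f g : ℝ → ℝ) : Prop :=
  ∀ φ : ℝ → ℝ, ContDiff ℝ (⊤ : ℕ∞) φ → HasCompactSupport φ →
    (∫ x : ℝ, f x * deriv φ x) = - ∫ x : ℝ, g x * φ x

/-- `f` belongs to the weighted Sobolev space `H^{2,1}(ℝ)`, with the data of its (weak)
second derivative `f₂`. -/
def H21Data (f f₂ : ℝ → ℝ) : Prop :=
  ContDiff ℝ 1 f ∧ IsWeakDeriv (deriv f) f₂ ∧
    MemLp (fun x => jap x * f x) 2 (volume : Measure ℝ) ∧
    MemLp (fun x => jap x * deriv f x) 2 (volume : Measure ℝ) ∧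
    MemLp (fun x => jap x * f₂ x) 2 (volume : Measure ℝ)

/-- The change of variable `y(x) = x − ∫_x^∞ (√(1 + m₀(s)²) − 1) ds`. -/
def yOf (m₀ : ℝ → ℝ) (x : ℝ) : ℝ :=
  x - ∫ s in Set.Ioi x, (Real.sqrt (1 + m₀ s ^ 2) - 1)

/-- For real-valued `m₀ ∈ H^{2,1}(ℝ)` the function
`y(x) = x − ∫_x^∞ (√(1 + m₀²) − 1) ds` is well defined, continuously differentiable with
`y'(x) = √(1 + m₀(x)²) ≥ 1`, and a strictly increasing bijection of `ℝ` onto `ℝ`. -/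
theorem change_of_variable_bijection (m₀ f₂ : ℝ → ℝ) (hm : H21Data m₀ f₂) :
    Integrable (fun s : ℝ => Real.sqrt (1 + m₀ s ^ 2) - 1) ∧
    (∀ x : ℝ, HasDerivAt (yOf m₀) (Real.sqrt (1 + m₀ x ^ 2)) x) ∧
    Continuous (fun x : ℝ => Real.sqrt (1 + m₀ x ^ 2)) ∧
    (∀ x : ℝ, 1 ≤ Real.sqrt (1 + m₀ x ^ 2)) ∧
    StrictMono (yOf m₀) ∧ Function.Bijective (yOf m₀) := by
  set g : ℝ → ℝ := fun s => Real.sqrt (1 + m₀ s ^ 2) - 1 with hg_def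
  have hm₀c : Continuous m₀ := hm.1.continuous
  have hone : ∀ x : ℝ, (1 : ℝ) ≤ Real.sqrt (1 + m₀ x ^ 2) := by
    intro x
    have h0 : (0:ℝ) ≤ 1 + m₀ x ^ 2 := by positivity
    have := Real.sq_sqrt h0
    have := Real.sqrt_nonneg (1 + m₀ x ^ 2)
    nlinarith
  have hg0 : ∀ s, 0 ≤ g s := fun s => by simpa [hg_def] using hone s
  have hgcont : Continuous g := by
    have : Continuous fun s => Real.sqrt (1 + m₀ s ^ 2) :=
      (continuous_const.add (hm₀c.pow 2)).sqrt
    exact this.sub continuous_const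
  -- bound g s ≤ (jap s * m₀ s)^2 / 2
  have hgbound : ∀ s, ‖g s‖ ≤ (jap s * m₀ s) ^ 2 / 2 := by
    intro s
    have hjap : (1:ℝ) ≤ jap s := by
      have h0 : (0:ℝ) ≤ 1 + s ^ 2 := by positivity
      have := Real.sq_sqrt h0
      have := Real.sqrt_nonneg (1 + s ^ 2)
      simp only [jap]; nlinarith
    have h0 : (0:ℝ) ≤ 1 + m₀ s ^ 2 := by positivity
    have h1 := Real.sq_sqrt h0
    have h2 := Real.sqrt_nonneg (1 + m₀ s ^ 2)
    have h3 : g s ≤ m₀ s ^ 2 / 2 := by simp only [hg_def]; nlinarith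
    have h4 : m₀ s ^ 2 ≤ (jap s * m₀ s) ^ 2 := by
      rw [mul_pow]
      nlinarith [sq_nonneg (m₀ s), mul_le_mul_of_nonneg_left hjap (le_trans zero_le_one hjap)]
    rw [Real.norm_of_nonneg (hg0 s)]
    linarith
  have hgint : Integrable g := by
    have hsq : Integrable (fun s => (jap s * m₀ s) ^ 2) := hm.2.2.1.integrable_sq
    exact (hsq.div_const 2).mono' hgcont.aestronglyMeasurable
      (Filter.Eventually.of_forall hgbound)
  -- decomposition of yOf
  have hiic : ∀ x : ℝ, IntegrableOn g (Iic x) := fun x => hgint.integrableOn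
  have hdecomp : ∀ x : ℝ, yOf m₀ x =
      x - ((∫ s, g s) - (∫ s in Iic (0:ℝ), g s)) + ∫ s in (0:ℝ)..x, g s := by
    intro x
    have h1 : (∫ s in Iic x, g s) + ∫ s in Ioi x, g s = ∫ s, g s := by
      rw [← setIntegral_union (Iic_disjoint_Ioi le_rfl) measurableSet_Ioi
        (hiic x) hgint.integrableOn, Iic_union_Ioi]
      simp [Measure.restrict_univ]
    have h2 : (∫ s in Iic x, g s) - ∫ s in Iic (0:ℝ), g s = ∫ s in (0:ℝ)..x, g s :=
      intervalIntegral.integral_Iic_sub_Iic (hiic 0) (hiic x)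
    simp only [yOf, ← hg_def]
    linarith
  have hderiv : ∀ x : ℝ, HasDerivAt (yOf m₀) (Real.sqrt (1 + m₀ x ^ 2)) x := by
    intro x
    have hF : HasDerivAt (fun x => ∫ s in (0:ℝ)..x, g s) (g x) x :=
      intervalIntegral.integral_hasDerivAt_right hgint.intervalIntegrable
        hgcont.stronglyMeasurable.stronglyMeasurableAtFilter hgcont.continuousAt
    have : HasDerivAt (fun x : ℝ =>
        x - ((∫ s, g s) - (∫ s in Iic (0:ℝ), g s)) + ∫ s in (0:ℝ)..x, g s)
        (1 + g x) x := ((hasDerivAt_id x).sub_const _).add hF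
    have heq : yOf m₀ = fun x : ℝ =>
        x - ((∫ s, g s) - (∫ s in Iic (0:ℝ), g s)) + ∫ s in (0:ℝ)..x, g s :=
      funext hdecomp
    rw [heq]
    convert this using 1
    simp [hg_def]
  have hsm : StrictMono (yOf m₀) := by
    apply strictMono_of_deriv_pos
    intro x
    rw [(hderiv x).deriv]
    linarith [hone x]
  have hycont : Continuous (yOf m₀) := by
    have : Differentiable ℝ (yOf m₀) := fun x => (hderiv x).differentiableAt
    exact this.continuous
  have hle : ∀ x : ℝ, yOf m₀ x ≤ x := by
    intro x
    have : 0 ≤ ∫ s in Ioi x, g s :=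
      setIntegral_nonneg measurableSet_Ioi fun s _ => hg0 s
    simp only [yOf, ← hg_def]; linarith
  have hge : ∀ x : ℝ, x - (∫ s, g s) ≤ yOf m₀ x := by
    intro x
    have : (∫ s in Ioi x, g s) ≤ ∫ s, g s :=
      setIntegral_le_integral hgint (Filter.Eventually.of_forall hg0)
    simp only [yOf, ← hg_def]; linarith
  have hsurj : Function.Surjective (yOf m₀) := by
    apply hycont.surjective
    · exact tendsto_atTop_mono hge (tendsto_atTop_add_const_right _ _ tendsto_id)
    · exact tendsto_atBot_mono hle tendsto_id
  exact ⟨hgint, hderiv, (continuous_const.add (hm₀c.pow 2)).sqrt, hone, hsm,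
    hsm.injective, hsurj⟩
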